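/- Let σ ∈ S_m with m ≥ 3, q > 0, and let N_n(σ,q) be the number of consecutive occurrences of σ in a Mallows(q) random permutation of length n ≥ m. Then the expected value satisfies E[N_n(σ,q)] = (n − m + 1) · q^{inv(σ)}/[m]_q!. In particular, for σ = 132 and σ = 231 and n ≥ 3, E[N_n(132,q)] = (n−2)q/[3]_q! and E[N_n(231,q)] = (n−2)q²/[3]_q!. -/

import Mathlib

open scoped Classical

/-- The q-integer `[k]_q = 1 + q + ... + q^(k-1)`. -/
noncomputable def qint (q : ℝ) (k : ℕ) : ℝ := ∑ i ∈ Finset.range k, q ^ i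

/-- The q-factorial `[n]_q! = [1]_q [2]_q ⋯ [n]_q`. -/
noncomputable def qfact (q : ℝ) (n : ℕ) : ℝ := ∏ i ∈ Finset.range n, qint q (i + 1)

/-- The number of inversions of a permutation of `{0, ..., n-1}`. -/
def inversions {n : ℕ} (π : Equiv.Perm (Fin n)) : ℕ :=
  (Finset.univ.filter (fun p : Fin n × Fin n => p.1 < p.2 ∧ π p.2 < π p.1)).card

/-- The pattern `σ ∈ S_m` occurs consecutively in `π ∈ S_n` starting at (0-indexed) position `j`:
the window `π_j, ..., π_{j+m-1}` is order-isomorphic to `σ`. -/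
def occursAt {m n : ℕ} (σ : Equiv.Perm (Fin m)) (π : Equiv.Perm (Fin n)) (j : ℕ) : Prop :=
  ∃ h : j + m ≤ n, ∀ a b : Fin m,
    σ a < σ b ↔
      π ⟨j + (a : ℕ), lt_of_lt_of_le (Nat.add_lt_add_left a.isLt j) h⟩ <
      π ⟨j + (b : ℕ), lt_of_lt_of_le (Nat.add_lt_add_left b.isLt j) h⟩

/-- `π` avoids `σ` as a consecutive pattern. -/
def avoids {m n : ℕ} (σ : Equiv.Perm (Fin m)) (π : Equiv.Perm (Fin n)) : Prop :=
  ∀ j : ℕ, ¬ occursAt σ π j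

/-- `P_n(σ, q)`: the probability that a Mallows(q) random permutation of length `n`
avoids `σ` as a consecutive pattern. -/
noncomputable def Pn (m : ℕ) (σ : Equiv.Perm (Fin m)) (q : ℝ) (n : ℕ) : ℝ :=
  (∑ π ∈ Finset.univ.filter (fun π : Equiv.Perm (Fin n) => avoids σ π),
    q ^ inversions π) / qfact q n

/-- The expected number of consecutive occurrences of `σ ∈ S_m` in a Mallows(q) random
permutation of length `n` (0-indexed occurrence positions `0, …, n-m`). -/
noncomputable def expectedOcc (m : ℕ) (σ : Equiv.Perm (Fin m)) (q : ℝ) (n : ℕ) : ℝ :=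
  ∑ π : Equiv.Perm (Fin n),
    (q ^ inversions π / qfact q n) *
      (((Finset.range (n - m + 1)).filter (fun j => occursAt σ π j)).card : ℝ)

/-!
Right multiplication by a permutation `τ` of the window `j, …, j + m - 1` turns an occurrence
of `σ` there into an occurrence of `στ` and changes only the inversions inside the window.
Hence the Mallows weight of `{π | st(π_j ⋯ π_{j+m-1}) = σ}` is `q ^ inv σ` times that of
`{π | st(π_j ⋯ π_{j+m-1}) = id}`; summing over `σ` identifies the ratio with
`q ^ inv σ / ∑_{σ'} q ^ inv σ'`, and linearity over the `n - m + 1` windows gives the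
expectation.
The same decomposition for a window of length `k` in `S_{k+1}` yields `∑ q ^ inv = [k]_q!`:
the `k + 1` permutations increasing on positions `1, …, k` are the `(cycleRange v)⁻¹`,
with exactly `v` inversions.
-/

open Finset Equiv

section Standardization

variable {α : Type*} [LinearOrder α] {m : ℕ}

theorem Equiv.Perm.forall_lt_iff_lt_iff_strictMono {f : Fin m → α} {σ : Perm (Fin m)} :
    (∀ a b, σ a < σ b ↔ f a < f b) ↔ StrictMono (f ∘ ⇑σ⁻¹) := by
  refine ⟨fun H x y hxy => ?_, fun H a b => ?_⟩
  · simpa using (H (σ⁻¹ x) (σ⁻¹ y)).1 (by simpa using hxy)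
  · simpa using (H.lt_iff_lt (a := σ a) (b := σ b)).symm

theorem Tuple.strictMono_comp_iff_eq_sort {f : Fin m → α} (hf : Function.Injective f)
    {σ : Perm (Fin m)} : StrictMono (f ∘ σ) ↔ σ = Tuple.sort f := by
  rw [Tuple.eq_sort_iff]
  refine ⟨fun H => ⟨H.monotone, fun i j hij heq => absurd (H.injective heq) hij.ne⟩,
    fun H => H.1.strictMono_of_injective (hf.comp σ.injective)⟩

end Standardization

variable {m n j : ℕ}

def window (h : j + m ≤ n) : Fin m ↪o Fin n :=
  OrderEmbedding.ofStrictMono (fun a => ⟨j + a, by have := a.2; omega⟩) fun a b hab => by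
    simp only [Fin.mk_lt_mk]; exact Nat.add_lt_add_left hab j

@[simp]
theorem val_window (h : j + m ≤ n) (a : Fin m) : (window h a : ℕ) = j + a :=
  rfl

theorem occursAt_iff {σ : Perm (Fin m)} {π : Perm (Fin n)} (h : j + m ≤ n) :
    occursAt σ π j ↔ ∀ a b, σ a < σ b ↔ π (window h a) < π (window h b) :=
  ⟨fun ⟨_, H⟩ => H, fun H => ⟨h, H⟩⟩

/-- The standardization `st(π_j ⋯ π_{j+m-1})` of the window of `π` at position `j`. -/
noncomputable def windowPattern (h : j + m ≤ n) (π : Perm (Fin n)) : Perm (Fin m) :=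
  (Tuple.sort (π ∘ window h))⁻¹

theorem occursAt_iff_windowPattern_eq {σ : Perm (Fin m)} {π : Perm (Fin n)} (h : j + m ≤ n) :
    occursAt σ π j ↔ windowPattern h π = σ := by
  rw [occursAt_iff h, windowPattern, inv_eq_iff_eq_inv, eq_comm]
  exact Perm.forall_lt_iff_lt_iff_strictMono.trans
    (Tuple.strictMono_comp_iff_eq_sort (π.injective.comp (window h).injective))

theorem mem_range_window_iff (h : j + m ≤ n) (x : Fin n) :
    x ∈ Set.range (window h) ↔ j ≤ x ∧ (x : ℕ) < j + m := by
  refine ⟨?_, fun hx => ⟨⟨x - j, by omega⟩, Fin.ext (by simp; omega)⟩⟩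
  rintro ⟨a, rfl⟩
  simp

noncomputable def windowPerm (h : j + m ≤ n) : Perm (Fin m) →* Perm (Fin n) :=
  Perm.viaEmbeddingHom (window h).toEmbedding

theorem windowPerm_apply_window (h : j + m ≤ n) (τ : Perm (Fin m)) (a : Fin m) :
    windowPerm h τ (window h a) = window h (τ a) :=
  Perm.viaEmbedding_apply τ (window h).toEmbedding a

theorem windowPerm_apply_of_notMem (h : j + m ≤ n) (τ : Perm (Fin m)) {x : Fin n}
    (hx : x ∉ Set.range (window h)) : windowPerm h τ x = x :=
  Perm.viaEmbedding_apply_of_notMem τ (window h).toEmbedding x hx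

theorem windowPerm_mem_range_iff (h : j + m ≤ n) (τ : Perm (Fin m)) (x : Fin n) :
    windowPerm h τ x ∈ Set.range (window h) ↔ x ∈ Set.range (window h) := by
  by_cases hx : x ∈ Set.range (window h)
  · obtain ⟨a, rfl⟩ := hx
    simp [windowPerm_apply_window]
  · rw [windowPerm_apply_of_notMem h τ hx]

theorem lt_iff_lt_of_mem_range_window (h : j + m ≤ n) {x x' y : Fin n}
    (hx : x ∈ Set.range (window h)) (hx' : x' ∈ Set.range (window h))
    (hy : y ∉ Set.range (window h)) : (x < y ↔ x' < y) ∧ (y < x ↔ y < x') := by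
  rw [mem_range_window_iff] at hx hx' hy
  simp only [Fin.lt_def]
  omega

theorem windowPerm_lt_windowPerm_iff (h : j + m ≤ n) (τ : Perm (Fin m)) {x y : Fin n}
    (hxy : ¬(x ∈ Set.range (window h) ∧ y ∈ Set.range (window h))) :
    windowPerm h τ x < windowPerm h τ y ↔ x < y := by
  by_cases hx : x ∈ Set.range (window h) <;> by_cases hy : y ∈ Set.range (window h)
  · exact absurd ⟨hx, hy⟩ hxy
  · rw [windowPerm_apply_of_notMem h τ hy]
    exact (lt_iff_lt_of_mem_range_window h ((windowPerm_mem_range_iff h τ x).2 hx) hx hy).1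
  · rw [windowPerm_apply_of_notMem h τ hx]
    exact (lt_iff_lt_of_mem_range_window h ((windowPerm_mem_range_iff h τ y).2 hy) hy hx).2
  · rw [windowPerm_apply_of_notMem h τ hx, windowPerm_apply_of_notMem h τ hy]

theorem occursAt_mul_windowPerm_iff (h : j + m ≤ n) {σ τ : Perm (Fin m)} {π : Perm (Fin n)} :
    occursAt (σ * τ) (π * windowPerm h τ) j ↔ occursAt σ π j := by
  simp only [occursAt_iff h, Perm.mul_apply, windowPerm_apply_window]
  exact ⟨fun H a b => by simpa using H (τ⁻¹ a) (τ⁻¹ b), fun H a b => H (τ a) (τ b)⟩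

def outerInversions (h : j + m ≤ n) (π : Perm (Fin n)) : ℕ :=
  #{p : Fin n × Fin n | (p.1 < p.2 ∧ π p.2 < π p.1) ∧
    ¬(p.1 ∈ Set.range (window h) ∧ p.2 ∈ Set.range (window h))}

theorem inversions_eq_add_outerInversions (h : j + m ≤ n) {σ : Perm (Fin m)} {π : Perm (Fin n)}
    (hπ : occursAt σ π j) : inversions π = inversions σ + outerInversions h π := by
  have hsplit := (card_filter_add_card_filter_not
    (s := {p : Fin n × Fin n | p.1 < p.2 ∧ π p.2 < π p.1})
    (fun p => p.1 ∈ Set.range (window h) ∧ p.2 ∈ Set.range (window h))).symm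
  rw [filter_filter, filter_filter] at hsplit
  rw [inversions, hsplit, outerInversions, inversions]
  congr 1
  symm
  refine card_bij (fun p _ => (window h p.1, window h p.2)) ?_ ?_ ?_
  · rintro ⟨a, b⟩ hab
    simp only [mem_filter, mem_univ, true_and] at hab ⊢
    exact ⟨⟨(window h).lt_iff_lt.2 hab.1, ((occursAt_iff h).1 hπ b a).1 hab.2⟩,
      Set.mem_range_self a, Set.mem_range_self b⟩
  · rintro ⟨a, b⟩ _ ⟨a', b'⟩ _ he
    simp only [Prod.mk.injEq, (window h).injective.eq_iff] at he
    rw [he.1, he.2]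
  · rintro ⟨x, y⟩ hxy
    simp only [mem_filter, mem_univ, true_and] at hxy
    obtain ⟨⟨hlt, hinv⟩, ⟨a, rfl⟩, ⟨b, rfl⟩⟩ := hxy
    refine ⟨(a, b), ?_, rfl⟩
    simp only [mem_filter, mem_univ, true_and]
    exact ⟨(window h).lt_iff_lt.1 hlt, ((occursAt_iff h).1 hπ b a).2 hinv⟩

theorem outerInversions_mul_windowPerm (h : j + m ≤ n) (π : Perm (Fin n)) (τ : Perm (Fin m)) :
    outerInversions h (π * windowPerm h τ) = outerInversions h π := by
  rw [outerInversions, outerInversions]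
  refine card_equiv ((windowPerm h τ).prodCongr (windowPerm h τ)) fun p => ?_
  simp only [mem_filter, mem_univ, true_and]
  simp only [Perm.mul_apply, Equiv.prodCongr_apply, Prod.map_fst, Prod.map_snd,
    windowPerm_mem_range_iff]
  constructor
  · rintro ⟨⟨hlt, hinv⟩, hout⟩
    exact ⟨⟨(windowPerm_lt_windowPerm_iff h τ hout).2 hlt, hinv⟩, hout⟩
  · rintro ⟨⟨hlt, hinv⟩, hout⟩
    exact ⟨⟨(windowPerm_lt_windowPerm_iff h τ hout).1 hlt, hinv⟩, hout⟩

theorem inversions_one (k : ℕ) : inversions (1 : Perm (Fin k)) = 0 := by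
  rw [inversions, card_eq_zero, filter_eq_empty_iff]
  exact fun p _ hp => lt_asymm hp.1 hp.2

section SumPowInversions

variable {R : Type*} [CommSemiring R]

theorem sum_occursAt_pow_inversions_eq_mul (h : j + m ≤ n) (q : R) (σ : Perm (Fin m)) :
    ∑ π ∈ univ.filter (fun π : Perm (Fin n) => occursAt σ π j), q ^ inversions π =
      q ^ inversions σ *
        ∑ π ∈ univ.filter (fun π : Perm (Fin n) => occursAt (1 : Perm (Fin m)) π j),
          q ^ inversions π := by
  rw [mul_sum]
  symm
  refine sum_nbij' (· * windowPerm h σ) (· * windowPerm h σ⁻¹) ?_ ?_ ?_ ?_ ?_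
  · intro ρ hρ
    simp only [mem_filter, mem_univ, true_and] at hρ ⊢
    simpa using (occursAt_mul_windowPerm_iff h (σ := 1)).2 hρ
  · intro π hπ
    simp only [mem_filter, mem_univ, true_and] at hπ ⊢
    simpa using (occursAt_mul_windowPerm_iff h (σ := σ) (τ := σ⁻¹)).2 hπ
  · intro ρ _
    simp [mul_assoc]
  · intro π _
    simp [mul_assoc]
  · intro ρ hρ
    simp only [mem_filter, mem_univ, true_and] at hρ
    have hρσ : occursAt σ (ρ * windowPerm h σ) j := by
      simpa using (occursAt_mul_windowPerm_iff h (σ := 1)).2 hρ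
    rw [inversions_eq_add_outerInversions h hρσ, outerInversions_mul_windowPerm,
      inversions_eq_add_outerInversions h hρ, inversions_one, zero_add, pow_add]

theorem sum_pow_inversions_eq_mul (h : j + m ≤ n) (q : R) :
    ∑ π : Perm (Fin n), q ^ inversions π =
      (∑ σ : Perm (Fin m), q ^ inversions σ) *
        ∑ π ∈ univ.filter (fun π : Perm (Fin n) => occursAt (1 : Perm (Fin m)) π j),
          q ^ inversions π := by
  rw [← sum_fiberwise univ (windowPattern h) (fun π => q ^ inversions π), sum_mul]
  refine sum_congr rfl fun σ _ => ?_
  simp_rw [← occursAt_iff_windowPattern_eq h]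
  exact sum_occursAt_pow_inversions_eq_mul h q σ

end SumPowInversions

section QFactorial

variable {k : ℕ}

theorem occursAt_one_cycleRange_symm (v : Fin (k + 1)) :
    occursAt (1 : Perm (Fin k)) v.cycleRange.symm 1 := by
  have h : 1 + k ≤ k + 1 := (Nat.add_comm 1 k).le
  have hw : ∀ c : Fin k, window h c = c.succ := fun c => Fin.ext (by simp [Nat.add_comm])
  refine (occursAt_iff h).2 fun a b => ?_
  simp [hw, Fin.succAbove_lt_succAbove_iff]

theorem cycleRange_symm_injective :
    Function.Injective fun v : Fin (k + 1) => (v.cycleRange.symm : Perm (Fin (k + 1))) :=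
  fun v w hvw => by simpa using congr_arg (· 0) hvw

theorem inversions_cycleRange_symm (v : Fin (k + 1)) : inversions v.cycleRange.symm = v := by
  set π : Perm (Fin (k + 1)) := v.cycleRange.symm
  have hπ0 : π 0 = v := Fin.cycleRange_symm_zero v
  have hstart : ∀ p : Fin (k + 1) × Fin (k + 1), p.1 < p.2 → π p.2 < π p.1 → p.1 = 0 := by
    rintro ⟨a, b⟩ hab hinv
    induction a using Fin.cases with
    | zero => rfl
    | succ a =>
      obtain ⟨b, rfl⟩ := Fin.exists_succ_eq.2 (Fin.ne_zero_of_lt hab)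
      simp only [π, Fin.cycleRange_symm_succ, Fin.succAbove_lt_succAbove_iff] at hinv
      exact absurd (Fin.succ_lt_succ_iff.1 hab) (lt_asymm hinv)
  calc inversions π = #{b | π b < v} := by
        refine card_nbij' Prod.snd (fun b => (0, b)) ?_ ?_ ?_ ?_
        · rintro ⟨a, b⟩ hp
          simp only [coe_filter, mem_univ, true_and, Set.mem_ofPred_eq] at hp ⊢
          obtain rfl : a = 0 := hstart (a, b) hp.1 hp.2
          exact hπ0 ▸ hp.2
        · intro b hb
          simp only [coe_filter, mem_univ, true_and, Set.mem_ofPred_eq] at hb ⊢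
          refine ⟨Fin.pos_iff_ne_zero.2 fun hb0 => ?_, hπ0 ▸ hb⟩
          rw [hb0, hπ0] at hb
          exact lt_irrefl _ hb
        · rintro ⟨a, b⟩ hp
          simp only [coe_filter, mem_univ, true_and, Set.mem_ofPred_eq] at hp
          obtain rfl : a = 0 := hstart (a, b) hp.1 hp.2
          rfl
        · intro b _
          rfl
    _ = #(Iio v) := card_equiv π (by simp)
    _ = v := Fin.card_Iio v

theorem card_filter_occursAt_one :
    #(univ.filter fun π : Perm (Fin (k + 1)) => occursAt (1 : Perm (Fin k)) π 1) = k + 1 := by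
  -- the case `q = 1` of `sum_pow_inversions_eq_mul` reads `(k + 1)! = k! * #{…}`
  have h := sum_pow_inversions_eq_mul (Nat.add_comm 1 k).le (1 : ℕ)
  simp only [one_pow, sum_const, card_univ, Fintype.card_perm, Fintype.card_fin, smul_eq_mul,
    mul_one, Nat.factorial_succ, mul_comm (k + 1)] at h
  exact (Nat.eq_of_mul_eq_mul_left (Nat.factorial_pos k) h).symm

theorem filter_occursAt_one_eq_image :
    univ.filter (fun π : Perm (Fin (k + 1)) => occursAt (1 : Perm (Fin k)) π 1) =
      univ.image fun v : Fin (k + 1) => v.cycleRange.symm := by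
  refine (eq_of_subset_of_card_le ?_ ?_).symm
  · rintro _ hπ
    obtain ⟨v, -, rfl⟩ := mem_image.1 hπ
    simpa using occursAt_one_cycleRange_symm v
  · rw [card_filter_occursAt_one, card_image_of_injective _ cycleRange_symm_injective, card_univ,
      Fintype.card_fin]

theorem sum_pow_inversions (q : ℝ) (k : ℕ) :
    ∑ π : Perm (Fin k), q ^ inversions π = qfact q k := by
  induction k with
  | zero => simp [qfact, inversions]
  | succ k ih =>
    rw [sum_pow_inversions_eq_mul (Nat.add_comm 1 k).le, ih, filter_occursAt_one_eq_image,
      sum_image fun v _ w _ hvw => cycleRange_symm_injective hvw, qfact, qfact, prod_range_succ]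
    simp only [inversions_cycleRange_symm]
    rw [Fin.sum_univ_eq_sum_range (fun i => q ^ i), qint]

end QFactorial

theorem qfact_pos {q : ℝ} (hq : 0 < q) (k : ℕ) : 0 < qfact q k :=
  prod_pos fun _ _ => sum_pos (fun t _ => pow_pos hq t) nonempty_range_add_one

theorem sum_occursAt_pow_inversions {q : ℝ} (hq : 0 < q) (h : j + m ≤ n) (σ : Perm (Fin m)) :
    ∑ π ∈ univ.filter (fun π : Perm (Fin n) => occursAt σ π j), q ^ inversions π =
      q ^ inversions σ * qfact q n / qfact q m := by
  rw [sum_occursAt_pow_inversions_eq_mul h, ← sum_pow_inversions q n,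
    sum_pow_inversions_eq_mul h, sum_pow_inversions q m]
  field_simp [(qfact_pos hq m).ne']

theorem expectedOcc_eq {q : ℝ} (hq : 0 < q) (σ : Perm (Fin m)) (hmn : m ≤ n) :
    expectedOcc m σ q n = ((n - m + 1 : ℕ) : ℝ) * (q ^ inversions σ / qfact q m) := by
  calc expectedOcc m σ q n
      = ∑ j ∈ range (n - m + 1),
          (∑ π ∈ univ.filter (fun π : Perm (Fin n) => occursAt σ π j), q ^ inversions π) /
            qfact q n := by
        simp only [expectedOcc, natCast_card_filter, mul_sum, sum_div, sum_filter, mul_ite,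
          mul_one, mul_zero, ite_div, zero_div]
        exact Finset.sum_comm
    _ = ∑ j ∈ range (n - m + 1), q ^ inversions σ / qfact q m := by
        refine sum_congr rfl fun j hj => ?_
        rw [sum_occursAt_pow_inversions hq (by grind) σ]
        field_simp [(qfact_pos hq n).ne']
    _ = ((n - m + 1 : ℕ) : ℝ) * (q ^ inversions σ / qfact q m) := by
        rw [sum_const, card_range, nsmul_eq_mul]

/-- The patterns `132` and `231` are `Equiv.swap 1 2` and `finRotate 3` on `Fin 3`. -/
theorem expected_occurrences_general (m : ℕ) (σ : Equiv.Perm (Fin m)) (q : ℝ)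
    (hq : 0 < q) :
    (∀ n : ℕ, m ≤ n →
      expectedOcc m σ q n
        = ((n - m + 1 : ℕ) : ℝ) * (q ^ inversions σ / qfact q m)) ∧
    (∀ n : ℕ, 3 ≤ n →
      expectedOcc 3 (Equiv.swap (1 : Fin 3) 2) q n = ((n - 2 : ℕ) : ℝ) * q / qfact q 3) ∧
    (∀ n : ℕ, 3 ≤ n →
      expectedOcc 3 (finRotate 3) q n = ((n - 2 : ℕ) : ℝ) * q ^ 2 / qfact q 3) := by
  have hlen : ∀ n, 3 ≤ n → n - 3 + 1 = n - 2 := by omega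
  refine ⟨fun n hn => expectedOcc_eq hq σ hn, fun n hn => ?_, fun n hn => ?_⟩
  · have hinv : inversions (Equiv.swap (1 : Fin 3) 2) = 1 := by decide
    rw [expectedOcc_eq hq _ hn, hinv, hlen n hn, pow_one, mul_div_assoc]
  · have hinv : inversions (finRotate 3) = 2 := by decide
    rw [expectedOcc_eq hq _ hn, hinv, hlen n hn, mul_div_assoc]

/-- `E[N_n(σ,q)] = (n − m + 1)·q^{inv σ}/[m]_q!`; in particular, for the
patterns `132` (the word `0 2 1`, i.e. `Equiv.swap 1 2` on `Fin 3`) and `231` (the word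
`1 2 0`, i.e. `finRotate 3`), `E[N_n(132,q)] = (n−2)q/[3]_q!` and
`E[N_n(231,q)] = (n−2)q²/[3]_q!` for `n ≥ 3`. -/
theorem expected_occurrences (m : ℕ) (hm : 3 ≤ m) (σ : Equiv.Perm (Fin m)) (q : ℝ)
    (hq : 0 < q) :
    (∀ n : ℕ, m ≤ n →
      expectedOcc m σ q n
        = ((n - m + 1 : ℕ) : ℝ) * (q ^ inversions σ / qfact q m)) ∧
    (∀ n : ℕ, 3 ≤ n →
      expectedOcc 3 (Equiv.swap (1 : Fin 3) 2) q n = ((n - 2 : ℕ) : ℝ) * q / qfact q 3) ∧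
    (∀ n : ℕ, 3 ≤ n →
      expectedOcc 3 (finRotate 3) q n = ((n - 2 : ℕ) : ℝ) * q ^ 2 / qfact q 3) :=
  expected_occurrences_general m σ q hq
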